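/- arXiv:math/0702119 — 4 statements merged into one kernel-verified Lean document; each statement's English description precedes it below -/
import Mathlib

section
/- Let $A$ be an algebra over a field $K$ generated by a finite-dimensional subspace $V$ with $1 \in V$, and let $d > 1$, $N \ge 1$. Suppose $\dim_K(V^n) \le 4^{-d}\, n\, (\dim_K V^{n+1} - \dim_K V^n)$ for all $n \ge N$. Then $\dim_K(V^{2n}) \ge 2^{2d-1} \dim_K(V^n)$ for all $n \ge N$. -/
/-- The doubling estimate in the proof of Lemma 3: if
`dim V^n ≤ 4^{-d} · n · (dim V^{n+1} - dim V^n)` for all `n ≥ N`, then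
`dim V^{2n} ≥ 2^{2d-1} · dim V^n` for all `n ≥ N`. -/
theorem stmt3 {K A : Type*} [Field K] [Ring A] [Algebra K A]
    (V : Submodule K A) [FiniteDimensional K ↥V] (h1 : (1 : A) ∈ V)
    (hgen : Algebra.adjoin K (V : Set A) = ⊤)
    (d : ℝ) (hd : 1 < d) (N : ℕ) (hN : 1 ≤ N)
    (hyp : ∀ n : ℕ, N ≤ n →
      (Module.finrank K ↥(V ^ n) : ℝ) ≤
        (4 : ℝ) ^ (-d) * (n : ℝ) *
          ((Module.finrank K ↥(V ^ (n + 1)) : ℝ) - (Module.finrank K ↥(V ^ n) : ℝ))) :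
    ∀ n : ℕ, N ≤ n →
      (Module.finrank K ↥(V ^ (2 * n)) : ℝ) ≥
        (2 : ℝ) ^ (2 * d - 1) * (Module.finrank K ↥(V ^ n) : ℝ) := by
  intro n hn
  have hn1 : 1 ≤ n := hN.trans hn
  have hfg : V.FG := Module.Finite.iff_fg.mp ‹_›
  have hfin : ∀ k : ℕ, Module.Finite K ↥(V ^ k) := fun k =>
    Module.Finite.iff_fg.mpr (hfg.pow k)
  set f : ℕ → ℝ := fun k => (Module.finrank K ↥(V ^ k) : ℝ) with hf
  have hfnonneg : ∀ k, 0 ≤ f k := fun k => Nat.cast_nonneg _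
  have hmono : ∀ i j : ℕ, i ≤ j → f i ≤ f j := by
    intro i j hij
    have hle : V ^ i ≤ V ^ j := by
      have h1V : (1 : Submodule K A) ≤ V := (Submodule.one_le).mpr h1
      exact pow_le_pow_right' h1V hij
    have := hfin j
    simp only [hf]
    exact_mod_cast Submodule.finrank_mono hle
  have c4pos : (0:ℝ) < (4:ℝ) ^ d := Real.rpow_pos_of_pos (by norm_num) d
  -- step inequality
  have hstep : ∀ i : ℕ, n ≤ i → f i + (4:ℝ) ^ d * (f i / i) ≤ f (i + 1) := by
    intro i hi
    have hipos : (0:ℝ) < (i : ℝ) := by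
      exact_mod_cast Nat.lt_of_lt_of_le (Nat.lt_of_lt_of_le Nat.zero_lt_one hn1) hi
    have h := hyp i (hn.trans hi)
    have h4 : (4:ℝ) ^ (-d) = ((4:ℝ) ^ d)⁻¹ := Real.rpow_neg (by norm_num) d
    rw [h4] at h
    have h' : f i ≤ ((4:ℝ)^d)⁻¹ * i * (f (i+1) - f i) := h
    have key : (4:ℝ) ^ d * (f i / i) ≤ f (i + 1) - f i := by
      rw [← mul_div_assoc, div_le_iff₀ hipos]
      have h2 : f i * (4:ℝ)^d ≤ ((4:ℝ)^d)⁻¹ * i * (f (i+1) - f i) * (4:ℝ)^d :=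
        mul_le_mul_of_nonneg_right h' c4pos.le
      have heq : ((4:ℝ)^d)⁻¹ * i * (f (i+1) - f i) * (4:ℝ)^d = (f (i+1) - f i) * i := by
        field_simp
      nlinarith [c4pos]
    linarith
  have hden : (0:ℝ) < (2 * n - 1 : ℝ) := by
    have : (1:ℝ) ≤ (n:ℝ) := by exact_mod_cast hn1
    linarith
  set c : ℝ := (4:ℝ) ^ d * (f n / (2 * n - 1)) with hc
  have hcstep : ∀ i : ℕ, n ≤ i → i ≤ 2 * n - 1 → f i + c ≤ f (i + 1) := by
    intro i hi hi2
    have hipos : (0:ℝ) < (i : ℝ) := by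
      exact_mod_cast Nat.lt_of_lt_of_le (Nat.lt_of_lt_of_le Nat.zero_lt_one hn1) hi
    have hi2' : (i : ℝ) ≤ 2 * n - 1 := by
      have : (i : ℝ) ≤ ((2 * n - 1 : ℕ) : ℝ) := by exact_mod_cast hi2
      push_cast [Nat.cast_sub (by omega : 1 ≤ 2 * n)] at this
      linarith
    have hdiv : f n / (2 * n - 1) ≤ f i / i :=
      div_le_div₀ (hfnonneg i) (hmono n i hi) hipos hi2'
    have := hstep i hi
    have : (4:ℝ) ^ d * (f n / (2*n-1)) ≤ (4:ℝ) ^ d * (f i / i) :=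
      mul_le_mul_of_nonneg_left hdiv c4pos.le
    have := hstep i hi
    simp only [hc]
    linarith
  -- accumulate: ∀ k ≤ n, f n + k * c ≤ f (n + k)
  have haccum : ∀ k : ℕ, k ≤ n → f n + k * c ≤ f (n + k) := by
    intro k
    induction k with
    | zero => intro _; simp
    | succ k ih =>
      intro hk
      have hk' : k ≤ n := Nat.le_of_succ_le hk
      have h1 := ih hk'
      have h2 : f (n + k) + c ≤ f (n + k + 1) := by
        apply hcstep (n + k) (Nat.le_add_right n k)
        omega
      push_cast
      calc f n + (k + 1) * c = (f n + k * c) + c := by ring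
        _ ≤ f (n + k) + c := by linarith
        _ ≤ f (n + k + 1) := h2
  have hfinal := haccum n le_rfl
  rw [← two_mul] at hfinal
  -- f n + n * c ≤ f (2n); show 2^(2d-1) * f n ≤ f n + n * c
  have hnc : (4:ℝ)^d / 2 * f n ≤ (n:ℝ) * c := by
    rw [hc]
    have hhalf : (1:ℝ)/2 ≤ (n:ℝ) / (2*n - 1) := by
      rw [div_le_div_iff₀ (by norm_num) hden]
      have : (1:ℝ) ≤ (n:ℝ) := by exact_mod_cast hn1
      linarith
    have := mul_le_mul_of_nonneg_left (mul_le_mul_of_nonneg_right hhalf (hfnonneg n)) c4pos.le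
    calc (4:ℝ)^d / 2 * f n = (4:ℝ)^d * ((1:ℝ)/2 * f n) := by ring
      _ ≤ (4:ℝ)^d * ((n:ℝ)/(2*n-1) * f n) := this
      _ = (n:ℝ) * ((4:ℝ)^d * (f n / (2*n-1))) := by ring
  have h2pow : (2:ℝ) ^ (2 * d - 1) = (4:ℝ)^d / 2 := by
    have h4 : (4:ℝ)^d = (2:ℝ)^(2*d) := by
      rw [show (4:ℝ) = (2:ℝ)^(2:ℕ) by norm_num, ← Real.rpow_natCast (2:ℝ) 2,
        ← Real.rpow_mul (by norm_num : (0:ℝ) ≤ 2)]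
      norm_num
    rw [h4, Real.rpow_sub (by norm_num : (0:ℝ) < 2), Real.rpow_one]
  rw [ge_iff_le, h2pow]
  linarith
end

section
/- Let $Q$ be a division ring containing a field $K$ in its center, let $A \subseteq Q$ be a $K$-subalgebra such that every element of $Q$ can be written as $b^{-1}a$ with $a, b \in A$, $b \ne 0$ (i.e., $Q$ is a left quotient ring of $A$), and let $E \subseteq Q$ be a division subring containing $K$. If $Q$ is infinite-dimensional as a right $E$-vector space, then the right $E$-submodule $AE$ of $Q$ generated by $A$ is infinite-dimensional as a right $E$-vector space. -/
/-!
Suppose `AE` were finite-dimensional over `E`. For `0 ≠ b ∈ A`, left multiplication by `b` is an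
injective right-`E`-linear endomorphism of `AE` (as `b A ⊆ A`), hence surjective; so `b⁻¹ a ∈ AE`
for all `a, b ∈ A`, `b ≠ 0`, i.e. `AE = Q`, contradicting `dim_E Q = ∞`.

Right `E`-vector spaces are encoded as left modules over the subfield `op E` of `Qᵐᵒᵖ`.
-/

open MulOpposite Submodule

section LeftQuotient

variable {F L : Type*} [DivisionRing F] [DivisionRing L] [Module F L] [SMulCommClass F L L]

theorem Submodule.inv_mul_mem_of_mul_mem (M : Submodule F L) [FiniteDimensional F M] {b : L}
    (hb : b ≠ 0) (hbM : ∀ x ∈ M, b * x ∈ M) {a : L} (ha : a ∈ M) : b⁻¹ * a ∈ M := by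
  let f : M →ₗ[F] M := (LinearMap.mulLeft F b).restrict hbM
  have hf : Function.Injective f := fun x y hxy =>
    Subtype.ext (mul_left_cancel₀ hb (congrArg Subtype.val hxy))
  obtain ⟨x, hx⟩ := LinearMap.injective_iff_surjective.mp hf ⟨a, ha⟩
  have hbx : b * x = a := congrArg Subtype.val hx
  rw [← hbx, inv_mul_cancel_left₀ hb]
  exact x.2

theorem Submodule.mul_mem_span_submonoid (S : Submonoid L) {b : L} (hb : b ∈ S) {x : L}
    (hx : x ∈ span F (S : Set L)) : b * x ∈ span F (S : Set L) :=
  (map_span_le (LinearMap.mulLeft F b) _ _).mpr (fun _ hy => subset_span (S.mul_mem hb hy))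
    ⟨x, hx, rfl⟩

theorem Submodule.span_submonoid_eq_top (S : Submonoid L)
    (hS : ∀ q : L, ∃ a ∈ S, ∃ b ∈ S, b ≠ 0 ∧ q = b⁻¹ * a)
    [FiniteDimensional F (span F (S : Set L))] : span F (S : Set L) = ⊤ := by
  refine eq_top_iff'.mpr fun q => ?_
  obtain ⟨a, ha, b, hb, hb0, rfl⟩ := hS q
  exact inv_mul_mem_of_mul_mem _ hb0 (fun x hx => mul_mem_span_submonoid S hb hx)
    (subset_span ha)

end LeftQuotient

section RightVectorSpace

variable {Q : Type*} [DivisionRing Q]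

def Subring.opSubfield (E : Subring Q) (hE : ∀ x ∈ E, x⁻¹ ∈ E) : Subfield Qᵐᵒᵖ :=
  { E.op with inv_mem' := fun x hx => hE x.unop hx }

theorem Subring.mem_span_opSubfield_iff (E : Subring Q) (hE : ∀ x ∈ E, x⁻¹ ∈ E)
    (s : Finset Q) (q : Q) :
    q ∈ span (E.opSubfield hE) (s : Set Q) ↔
      ∃ c : Q → Q, (∀ x ∈ s, c x ∈ E) ∧ q = ∑ x ∈ s, x * c x := by
  constructor
  · rw [mem_span_finset]
    rintro ⟨f, -, rfl⟩
    exact ⟨fun x => unop (f x : Qᵐᵒᵖ), fun x _ => (f x).2, rfl⟩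
  · rintro ⟨c, hc, rfl⟩
    refine sum_mem fun x hx => ?_
    exact smul_mem _ (⟨op (c x), hc x hx⟩ : E.opSubfield hE) (subset_span hx)

end RightVectorSpace

theorem stmt5_general {K Q : Type*} [Field K] [DivisionRing Q] [Algebra K Q]
    (A : Subalgebra K Q)
    (hQuot : ∀ q : Q, ∃ a ∈ A, ∃ b ∈ A, b ≠ 0 ∧ q = b⁻¹ * a)
    (E : Subring Q)
    (hEinv : ∀ x ∈ E, x⁻¹ ∈ E)
    (hQinf : ¬ ∃ s : Finset Q, ∀ q : Q, ∃ c : Q → Q,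
      (∀ x ∈ s, c x ∈ E) ∧ q = ∑ x ∈ s, x * c x) :
    ¬ ∃ s : Finset Q, ∀ a ∈ A, ∃ c : Q → Q,
      (∀ x ∈ s, c x ∈ E) ∧ (a : Q) = ∑ x ∈ s, x * c x := by
  rintro ⟨s, hs⟩
  set F := E.opSubfield hEinv
  have hAs : span F (A : Set Q) ≤ span F (s : Set Q) :=
    span_le.mpr fun a ha => (E.mem_span_opSubfield_iff hEinv s a).mpr (hs a ha)
  have : FiniteDimensional F (span F (A : Set Q)) := finiteDimensional_of_le hAs
  have hAtop : span F (A : Set Q) = ⊤ := span_submonoid_eq_top A.toSubmonoid hQuot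
  refine hQinf ⟨s, fun q => (E.mem_span_opSubfield_iff hEinv s q).mp (hAs ?_)⟩
  exact hAtop ▸ mem_top

/-- Remark 1 of the paper: if `Q` is a left quotient division ring of the subalgebra `A`
(every element of `Q` is `b⁻¹ a` with `a, b ∈ A`, `b ≠ 0`), `E` is a division subring of
`Q` containing `K`, and `Q` is infinite-dimensional as a right `E`-vector space, then the
right `E`-module `AE` generated by `A` is infinite-dimensional as a right `E`-vector space. -/
theorem stmt5 {K Q : Type*} [Field K] [DivisionRing Q] [Algebra K Q]
    (A : Subalgebra K Q)
    (hQuot : ∀ q : Q, ∃ a ∈ A, ∃ b ∈ A, b ≠ 0 ∧ q = b⁻¹ * a)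
    (E : Subring Q) (hEK : ∀ c : K, algebraMap K Q c ∈ E)
    (hEinv : ∀ x ∈ E, x⁻¹ ∈ E)
    (hQinf : ¬ ∃ s : Finset Q, ∀ q : Q, ∃ c : Q → Q,
      (∀ x ∈ s, c x ∈ E) ∧ q = ∑ x ∈ s, x * c x) :
    ¬ ∃ s : Finset Q, ∀ a ∈ A, ∃ c : Q → Q,
      (∀ x ∈ s, c x ∈ E) ∧ (a : Q) = ∑ x ∈ s, x * c x :=
  stmt5_general A hQuot E hEinv hQinf
end

section
/- Let $D$ be a division ring containing a field $K$ in its center, and let $S_1, S_2$ be finite subsets of $D$ containing $1$. Suppose there exist $a_1, \ldots, a_n$ in the set $S_2^n$ of $n$-fold products of elements of $S_2$ that are left-linearly independent over a division subring $D_1 \supseteq K$, and $b_1, \ldots, b_n \in S_1^n \subseteq D_1$ that are right-linearly independent over $K$. Then the $n^2$ products $\{b_j a_i : 1 \le i, j \le n\}$, all lying in $(S_1 \cup S_2)^{2n}$, are linearly independent over $K$. -/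
/-- An element of `D` is a product of `m` elements of the subset `S`. -/
def IsProdOfLen {D : Type*} [Monoid D] (S : Set D) (m : ℕ) (x : D) : Prop :=
  ∃ l : List D, l.length = m ∧ (∀ y ∈ l, y ∈ S) ∧ x = l.prod

/-- The independence argument in the proof of Theorem 1: if `a_1, …, a_n ∈ S₂ⁿ` are
left-linearly independent over the division subring `D₁` and `b_1, …, b_n ∈ S₁ⁿ ⊆ D₁`
are right-linearly independent over `K`, then the `n²` products `b_j a_i` are
`K`-linearly independent and all lie in `(S₁ ∪ S₂)^{2n}`. -/
theorem stmt7 {K D : Type*} [Field K] [DivisionRing D] [Algebra K D]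
    (D₁ : Subring D) (hD₁K : ∀ c : K, algebraMap K D c ∈ D₁)
    (hD₁inv : ∀ x ∈ D₁, x⁻¹ ∈ D₁)
    (S₁ S₂ : Finset D) (h1S₁ : (1 : D) ∈ S₁) (h1S₂ : (1 : D) ∈ S₂)
    (hS₁D₁ : (S₁ : Set D) ⊆ (D₁ : Set D))
    (n : ℕ) (a b : Fin n → D)
    (ha : ∀ i, IsProdOfLen (S₂ : Set D) n (a i))
    (hb : ∀ i, IsProdOfLen (S₁ : Set D) n (b i))
    (haindep : ∀ c : Fin n → D, (∀ i, c i ∈ D₁) →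
      ∑ i, c i * a i = 0 → ∀ i, c i = 0)
    (hbindep : ∀ c : Fin n → K, ∑ i, b i * algebraMap K D (c i) = 0 → ∀ i, c i = 0) :
    LinearIndependent K (fun p : Fin n × Fin n => b p.2 * a p.1) ∧
    ∀ i j : Fin n, IsProdOfLen ((S₁ : Set D) ∪ (S₂ : Set D)) (2 * n) (b j * a i) := by
  have hbD₁ : ∀ j, b j ∈ D₁ := by
    intro j
    obtain ⟨l, _, hl, hprod⟩ := hb j
    rw [hprod]
    exact list_prod_mem (fun x hx => hS₁D₁ (hl x hx))
  constructor
  · rw [Fintype.linearIndependent_iff]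
    intro g hg p
    have key : ∑ i, (∑ j, b j * algebraMap K D (g (i, j))) * a i = 0 := by
      rw [← hg, Fintype.sum_prod_type]
      simp_rw [Finset.sum_mul]
      refine Finset.sum_congr rfl fun i _ => Finset.sum_congr rfl fun j _ => ?_
      rw [Algebra.smul_def, ← Algebra.commutes (g (i, j)) (b j), mul_assoc]
    have h1 : ∀ i, (∑ j, b j * algebraMap K D (g (i, j))) = 0 := by
      apply haindep _ (fun i => Subring.sum_mem _ (fun j _ =>
        Subring.mul_mem _ (hbD₁ j) (hD₁K _))) key
    have := hbindep (fun j => g (p.1, j)) (h1 p.1) p.2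
    simpa using this
  · intro i j
    obtain ⟨la, hla, hlaS, hpa⟩ := ha i
    obtain ⟨lb, hlb, hlbS, hpb⟩ := hb j
    refine ⟨lb ++ la, ?_, ?_, ?_⟩
    · simp [hla, hlb]; ring
    · intro y hy
      rcases List.mem_append.mp hy with h | h
      · exact Or.inl (hlbS y h)
      · exact Or.inr (hlaS y h)
    · rw [List.prod_append, hpa, hpb]
end

section
/- Let $D$ be a division ring containing a field $K$ in its center, and let $D_1 \subseteq D_2 \subseteq D$ be division subrings containing $K$, each finitely generated as a division algebra over $K$. If $D_1$ is infinite-dimensional as a left $K$-vector space and $D_2$ is infinite-dimensional as a left $D_1$-vector space, then $\mathrm{GKdim}(D_2) \ge 2$. -/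
/-!
Choose finite-dimensional `K`-spaces `U ⊆ D₁` and `V ⊆ D₂` containing `1` and generators of
`D₁`, resp. of `D₁` and `D₂`. If `V ^ (n + 1) ⊆ D₁ V ^ n`, then the `x` with
`D₁ V ^ n * x ⊆ D₁ V ^ n` form a division subring (right multiplication by `x ≠ 0` is an
injective, hence bijective, endomorphism of the finite-dimensional left `D₁`-space `D₁ V ^ n`)
containing `K` and the generators of `D₂`, so `D₂ ⊆ D₁ V ^ n` would be finite-dimensional over
`D₁`. So the `D₁ V ^ n` grow strictly and contain `n` left `D₁`-independent elements `aᵢ ∈ V ^ n`;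
the same argument with `K` in place of `D₁` gives `n` `K`-independent `bⱼ ∈ U ^ n`. The `n²`
products `bⱼ aᵢ ∈ V ^ (2 n)` are `K`-independent, and quadratic growth means GK dimension `≥ 2`.
-/

open Filter

/-- The GK growth exponent `limsup_n log(dim V^n)/log n` (in `EReal`) of a
finite-dimensional subspace `V` of a `K`-algebra. -/
noncomputable def gkWrt (K : Type*) {Q : Type*} [Field K] [Ring Q] [Algebra K Q]
    (V : Submodule K Q) : EReal :=
  Filter.limsup
    (fun n : ℕ => ((Real.log (Module.finrank K ↥(V ^ n)) / Real.log n : ℝ) : EReal)) atTop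

/-- The GK dimension of a subset `D` of a `K`-algebra `Q`: the supremum of GK growth
exponents over finite-dimensional subspaces `V ⊆ D` with `1 ∈ V`. -/
noncomputable def gkOfSet (K : Type*) {Q : Type*} [Field K] [Ring Q] [Algebra K Q]
    (D : Set Q) : EReal :=
  sSup { x : EReal | ∃ V : Submodule K Q, FiniteDimensional K ↥V ∧ (1 : Q) ∈ V ∧
    (V : Set Q) ⊆ D ∧ x = gkWrt K V }

/-- `E` is a division subring of `Q` containing (the image of) `K`. -/
def IsDivSub {K Q : Type*} [Field K] [DivisionRing Q] [Algebra K Q] (E : Subring Q) : Prop :=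
  (∀ c : K, algebraMap K Q c ∈ E) ∧ (∀ x ∈ E, x⁻¹ ∈ E)

/-- `E` is generated, as a division algebra over `K`, by the finite set `S`. -/
def IsDivGenBy {K Q : Type*} [Field K] [DivisionRing Q] [Algebra K Q]
    (E : Subring Q) (S : Finset Q) : Prop :=
  IsDivSub (K := K) E ∧ (S : Set Q) ⊆ E ∧
    ∀ E' : Subring Q, IsDivSub (K := K) E' → (S : Set Q) ⊆ E' → E ≤ E'


open Submodule Module

def rightStabilizer {D : Type*} [Ring D] (M : AddSubgroup D) : Subring D where
  carrier := {x | ∀ m ∈ M, m * x ∈ M}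
  mul_mem' hx hy m hm := by rw [← mul_assoc]; exact hy _ (hx m hm)
  one_mem' m hm := by rwa [mul_one]
  add_mem' hx hy m hm := by rw [mul_add]; exact add_mem (hx m hm) (hy m hm)
  zero_mem' m _ := by rw [mul_zero]; exact zero_mem M
  neg_mem' hx m hm := by rw [mul_neg]; exact neg_mem (hx m hm)

section RightStabilizer

variable {K D : Type*} [Field K] [DivisionRing D] [Algebra K D]

theorem inv_mem_rightStabilizer {A : Type*} [DivisionRing A] [Module A D] [IsScalarTower A D D]
    (M : Submodule A D) [FiniteDimensional A M] {x : D}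
    (hx : x ∈ rightStabilizer M.toAddSubgroup) : x⁻¹ ∈ rightStabilizer M.toAddSubgroup := by
  rcases eq_or_ne x 0 with rfl | hx0
  · rwa [inv_zero]
  let f : M →ₗ[A] M := (LinearMap.mulRight A x).restrict hx
  have hf : Function.Injective f := fun m m' h =>
    Subtype.ext (mul_right_cancel₀ hx0 (congrArg Subtype.val h))
  intro m hm
  obtain ⟨u, hu⟩ := LinearMap.injective_iff_surjective.1 hf ⟨m, hm⟩
  have hux : (u : D) * x = m := congrArg Subtype.val hu
  rw [← hux, mul_inv_cancel_right₀ hx0]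
  exact u.2

theorem algebraMap_mem_rightStabilizer {A : Type*} [DivisionRing A] [Algebra K A] [Module A D]
    [IsScalarTower K A D] (M : Submodule A D) (c : K) :
    algebraMap K D c ∈ rightStabilizer M.toAddSubgroup := fun m hm => by
  rw [← Algebra.commutes, ← Algebra.smul_def, ← algebraMap_smul A]
  exact M.smul_mem _ hm

end RightStabilizer

namespace IsDivSub

variable {K D : Type*} [Field K] [DivisionRing D] [Algebra K D] {E : Subring D}

def toSubalgebra (hE : IsDivSub (K := K) E) : Subalgebra K D :=
  { E with algebraMap_mem' := hE.1 }

def toSubfield (hE : IsDivSub (K := K) E) : Subfield D := { E with inv_mem' := hE.2 }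

abbrev algebra (hE : IsDivSub (K := K) E) : Algebra K hE.toSubfield :=
  ((algebraMap K D).codRestrict hE.toSubfield hE.1).toAlgebra' fun c x =>
    Subtype.ext (Algebra.commutes c (x : D))

theorem isScalarTower (hE : IsDivSub (K := K) E) :
    letI := hE.algebra; IsScalarTower K hE.toSubfield D :=
  letI := hE.algebra
  ⟨fun c f x => by
    simp only [Algebra.smul_def]
    exact mul_assoc (algebraMap K D c) f x⟩

theorem span_subset (hE : IsDivSub (K := K) E) {s : Set D} (hs : s ⊆ E) :
    (span K s : Set D) ⊆ E :=
  span_le (p := Subalgebra.toSubmodule hE.toSubalgebra).2 hs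

theorem pow_subset (hE : IsDivSub (K := K) E) {V : Submodule K D} (hV : (V : Set D) ⊆ E)
    (n : ℕ) : ((V ^ n : Submodule K D) : Set D) ⊆ E := by
  intro x hx
  induction hx using Submodule.pow_induction_on_left' with
  | algebraMap c => exact hE.1 c
  | add _ _ _ _ _ hx hy => exact add_mem hx hy
  | mem_mul m hm _ _ _ hx => exact mul_mem (hV hm) hx

end IsDivSub

section Stabilization

variable {K D A : Type*} [Field K] [DivisionRing D] [Algebra K D] [DivisionRing A] [Module A D]
  [IsScalarTower A D D]

theorem IsDivGenBy.subset_of_mul_mem [Algebra K A] [IsScalarTower K A D] {E : Subring D}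
    {S : Finset D} (hE : IsDivGenBy (K := K) E S) (M : Submodule A D) [FiniteDimensional A M]
    (h1 : (1 : D) ∈ M) (hS : ∀ s ∈ S, ∀ m ∈ M, m * s ∈ M) : (E : Set D) ⊆ M := by
  have hle : E ≤ rightStabilizer M.toAddSubgroup :=
    hE.2.2 _ ⟨algebraMap_mem_rightStabilizer M, fun _ => inv_mem_rightStabilizer M⟩ hS
  intro q hq
  simpa using hle hq 1 h1

theorem mul_mem_span_pow {V : Submodule K D} {n : ℕ}
    (h : ((V ^ (n + 1) : Submodule K D) : Set D) ⊆
      (span A ((V ^ n : Submodule K D) : Set D) : Set D))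
    {m v : D} (hm : m ∈ span A ((V ^ n : Submodule K D) : Set D)) (hv : v ∈ V) :
    m * v ∈ span A ((V ^ n : Submodule K D) : Set D) := by
  induction hm using span_induction with
  | mem x hx => exact h (by rw [pow_succ]; exact mul_mem_mul hx hv)
  | zero => simp
  | add x y _ _ hx hy => rw [add_mul]; exact add_mem hx hy
  | smul a x _ hx => rw [smul_mul_assoc]; exact smul_mem _ a hx

theorem IsDivGenBy.exists_finset_of_pow_succ_subset_span [Algebra K A] [IsScalarTower K A D]
    {E : Subring D} {S : Finset D} (hE : IsDivGenBy (K := K) E S) {V : Submodule K D}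
    (hV : V.FG) (h1 : (1 : D) ∈ V) (hSV : (S : Set D) ⊆ V) (hVE : (V : Set D) ⊆ E) {n : ℕ}
    (h : ((V ^ (n + 1) : Submodule K D) : Set D) ⊆
      (span A ((V ^ n : Submodule K D) : Set D) : Set D)) :
    ∃ t : Finset D, (t : Set D) ⊆ E ∧ ∀ q ∈ E, ∃ c : D → A, q = ∑ x ∈ t, c x • x := by
  obtain ⟨t, ht⟩ := hV.pow n
  have hM : span A ((V ^ n : Submodule K D) : Set D) = span A ↑t := by
    rw [← ht, span_span_of_tower]
  have : FiniteDimensional A (span A ((V ^ n : Submodule K D) : Set D)) :=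
    hM ▸ FiniteDimensional.span_finset A t
  have h1n : (1 : D) ∈ V ^ n := one_le.1 (one_le_pow_of_one_le' (one_le.2 h1) n)
  have hEM := hE.subset_of_mul_mem (span A ((V ^ n : Submodule K D) : Set D)) (subset_span h1n)
    fun s hs m hm => mul_mem_span_pow h hm (hSV hs)
  refine ⟨t, fun x hx => hE.1.pow_subset hVE n (ht ▸ subset_span hx), fun q hq => ?_⟩
  obtain ⟨c, -, hc⟩ := mem_span_finset.1 (hM ▸ hEM hq)
  exact ⟨c, hc.symm⟩

end Stabilization

theorem exists_linearIndependent_of_not_subset_span {A X : Type*} [DivisionRing A]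
    [AddCommGroup X] [Module A X] {P : ℕ → Set X} (hP : Monotone P)
    (h : ∀ n, ¬ P (n + 1) ⊆ span A (P n)) :
    ∀ n, ∃ b : Fin n → X, (∀ i, b i ∈ P n) ∧ LinearIndependent A b
  | 0 => ⟨Fin.elim0, fun i => i.elim0, linearIndependent_empty_type⟩
  | n + 1 => by
    obtain ⟨b, hbP, hb⟩ := exists_linearIndependent_of_not_subset_span hP h n
    have : ¬ P (n + 1) ⊆ span A (Set.range b) :=
      fun hs => h n (hs.trans (span_mono (Set.range_subset_iff.2 hbP)))
    obtain ⟨x, hxP, hx⟩ := Set.not_subset.1 this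
    refine ⟨Fin.snoc b x, Fin.lastCases ?_ fun i => ?_, linearIndependent_finSnoc.2 ⟨hb, hx⟩⟩
    · simpa using hxP
    · simpa using hP n.le_succ (hbP i)

section Counting

variable {K D : Type*} [Field K] [DivisionRing D] [Algebra K D]

theorem linearIndependent_mul_of_mem (F : Subfield D) [Algebra K F] [IsScalarTower K F D]
    {ι ι' : Type*} {b : ι → D} (hbF : ∀ j, b j ∈ F) (hb : LinearIndependent K b)
    {a : ι' → D} (ha : LinearIndependent F a) :
    LinearIndependent K fun p : ι × ι' => b p.1 * a p.2 := by
  let β : ι → F := fun j => ⟨b j, hbF j⟩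
  let incl : F →ₗ[K] D :=
    { toFun := Subtype.val
      map_add' := fun _ _ => rfl
      map_smul' := fun c f => by
        have h := smul_assoc c f (1 : D)
        rwa [show (c • f) • (1 : D) = ↑(c • f) from mul_one _,
          show f • (1 : D) = ↑f from mul_one _] at h }
  exact linearIndependent_smul (LinearIndependent.of_comp incl hb : LinearIndependent K β) ha

theorem mul_self_le_finrank_pow (F : Subfield D) [Algebra K F] [IsScalarTower K F D]
    {U V : Submodule K D} (hVfg : V.FG) (hU1 : (1 : D) ∈ U) (hV1 : (1 : D) ∈ V) (hUV : U ≤ V)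
    (hUF : ∀ n, ((U ^ n : Submodule K D) : Set D) ⊆ F) (hU : ∀ n, ¬ U ^ (n + 1) ≤ U ^ n)
    (hV : ∀ n, ¬ ((V ^ (n + 1) : Submodule K D) : Set D) ⊆
      (span F ((V ^ n : Submodule K D) : Set D) : Set D))
    (n : ℕ) : n * n ≤ finrank K ↥(V ^ (2 * n)) := by
  obtain ⟨b, hbU, hb⟩ := exists_linearIndependent_of_not_subset_span (A := K)
    (P := fun n => ((U ^ n : Submodule K D) : Set D))
    (fun _ _ hmn => pow_le_pow_right' (one_le.2 hU1) hmn) (fun n => by rw [span_eq]; exact hU n) n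
  obtain ⟨a, haV, ha⟩ := exists_linearIndependent_of_not_subset_span
    (P := fun n => ((V ^ n : Submodule K D) : Set D))
    (fun _ _ hmn => pow_le_pow_right' (one_le.2 hV1) hmn) hV n
  have hmem : ∀ p : Fin n × Fin n, b p.1 * a p.2 ∈ V ^ (2 * n) := fun p => by
    rw [two_mul, pow_add]
    exact mul_mem_mul (pow_le_pow_left' hUV n (hbU p.1)) (haV p.2)
  have : Module.Finite K ↥(V ^ (2 * n)) := Module.Finite.iff_fg.2 (hVfg.pow _)
  have hind : LinearIndependent K fun p => (⟨b p.1 * a p.2, hmem p⟩ : ↥(V ^ (2 * n))) :=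
    .of_comp (V ^ (2 * n)).subtype (linearIndependent_mul_of_mem F (fun j => hUF n (hbU j)) hb ha)
  simpa using hind.fintype_card_le_finrank

end Counting

section Growth

variable {K Q : Type*} [Field K] [Ring Q] [Algebra K Q]

theorem le_gkWrt_of_eventually_le_finrank {V : Submodule K Q} (d : ℕ) {c : ℝ} (hc : 0 < c)
    (h : ∀ᶠ m : ℕ in atTop, c * (m : ℝ) ^ d ≤ finrank K ↥(V ^ m)) : (d : EReal) ≤ gkWrt K V := by
  have hlog : Tendsto (fun m : ℕ => Real.log m) atTop atTop :=
    Real.tendsto_log_atTop.comp tendsto_natCast_atTop_atTop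
  have hlim : Tendsto (fun m : ℕ => (d + Real.log c / Real.log m : ℝ)) atTop (nhds (d : ℝ)) := by
    simpa using tendsto_const_nhds.add (tendsto_const_nhds.div_atTop hlog)
  have hle : ∀ᶠ m : ℕ in atTop,
      d + Real.log c / Real.log m ≤ Real.log (finrank K ↥(V ^ m)) / Real.log m := by
    filter_upwards [h, eventually_ge_atTop 2] with m hm hm2
    have hlogm : 0 < Real.log m := Real.log_pos (by exact_mod_cast hm2)
    have hpos : 0 < c * (m : ℝ) ^ d := by positivity
    have hlog_le := Real.log_le_log hpos hm
    rw [Real.log_mul hc.ne' (by positivity), Real.log_pow] at hlog_le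
    rw [le_div_iff₀ hlogm, add_mul, div_mul_cancel₀ _ hlogm.ne']
    linarith
  calc (d : EReal) = limsup (fun m : ℕ => ((d + Real.log c / Real.log m : ℝ) : EReal)) atTop :=
        ((EReal.tendsto_coe.2 hlim).limsup_eq).symm
    _ ≤ gkWrt K V := limsup_le_limsup (hle.mono fun m hm => EReal.coe_le_coe_iff.2 hm)

theorem two_le_gkWrt {V : Submodule K Q} (hVfg : V.FG) (h1 : (1 : Q) ∈ V)
    (h : ∀ n, n * n ≤ finrank K ↥(V ^ (2 * n))) : 2 ≤ gkWrt K V := by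
  refine le_gkWrt_of_eventually_le_finrank 2 (c := 1 / 16) (by norm_num) ?_
  filter_upwards [eventually_ge_atTop 2] with m hm
  have : Module.Finite K ↥(V ^ m) := Module.Finite.iff_fg.2 (hVfg.pow m)
  have hmono : finrank K ↥(V ^ (2 * (m / 2))) ≤ finrank K ↥(V ^ m) :=
    Submodule.finrank_mono (pow_le_pow_right' (one_le.2 h1) (Nat.mul_div_le m 2))
  have hm4 : (m : ℝ) ≤ 4 * (m / 2 : ℕ) := by
    have : m ≤ 4 * (m / 2) := by omega
    exact_mod_cast this
  calc 1 / 16 * (m : ℝ) ^ 2 ≤ (m / 2 : ℕ) * (m / 2 : ℕ) := by nlinarith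
    _ ≤ finrank K ↥(V ^ m) := by exact_mod_cast (h (m / 2)).trans hmono

end Growth

/-- The GK dimension estimate in the proof of Theorem 1: if `D₁ ⊆ D₂` are finitely
generated division subalgebras of `D` with `D₁` infinite-dimensional over `K` and `D₂`
infinite-dimensional as a left `D₁`-vector space, then `GKdim D₂ ≥ 2`. -/
theorem stmt10 {K D : Type*} [Field K] [DivisionRing D] [Algebra K D]
    (D₁ D₂ : Subring D)
    (hD₁ : IsDivSub (K := K) D₁) (hD₂ : IsDivSub (K := K) D₂)
    (h12 : D₁ ≤ D₂)
    (hfg₁ : ∃ S : Finset D, IsDivGenBy (K := K) D₁ S)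
    (hfg₂ : ∃ S : Finset D, IsDivGenBy (K := K) D₂ S)
    (hinf₁ : ¬ ∃ s : Finset D, (s : Set D) ⊆ D₁ ∧ ∀ q ∈ D₁, ∃ c : D → K,
      q = ∑ x ∈ s, algebraMap K D (c x) * x)
    (hinf₂ : ¬ ∃ s : Finset D, (s : Set D) ⊆ D₂ ∧ ∀ q ∈ D₂, ∃ c : D → D,
      (∀ x ∈ s, c x ∈ D₁) ∧ q = ∑ x ∈ s, c x * x) :
    (2 : EReal) ≤ gkOfSet K (D₂ : Set D) := by
  obtain ⟨S₁, hS₁⟩ := hfg₁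
  obtain ⟨S₂, hS₂⟩ := hfg₂
  let := hD₁.algebra
  have := hD₁.isScalarTower
  set U := span K (insert 1 (S₁ : Set D))
  set V := span K (insert 1 ((S₁ : Set D) ∪ S₂))
  have hUV : U ≤ V := span_mono (Set.insert_subset_insert Set.subset_union_left)
  have h1U : (1 : D) ∈ U := subset_span (Set.mem_insert _ _)
  have h1V : (1 : D) ∈ V := hUV h1U
  have hUD₁ : (U : Set D) ⊆ D₁ := hD₁.span_subset (Set.insert_subset D₁.one_mem hS₁.2.1)
  have hVD₂ : (V : Set D) ⊆ D₂ := hD₂.span_subset (Set.insert_subset D₂.one_mem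
    (Set.union_subset (hS₁.2.1.trans h12) hS₂.2.1))
  have hVfg : V.FG := fg_span (Set.toFinite _)
  have hU : ∀ n, ¬ U ^ (n + 1) ≤ U ^ n := fun n hn => hinf₁ <| by
    obtain ⟨t, ht, hsum⟩ := hS₁.exists_finset_of_pow_succ_subset_span (A := K)
      (fg_span (Set.toFinite _)) h1U (subset_span.trans' (Set.subset_insert _ _)) hUD₁ (by rwa [span_eq])
    exact ⟨t, ht, fun q hq => (hsum q hq).imp fun c hc => by simpa only [Algebra.smul_def] using hc⟩
  have hV : ∀ n, ¬ ((V ^ (n + 1) : Submodule K D) : Set D) ⊆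
      (span hD₁.toSubfield ((V ^ n : Submodule K D) : Set D) : Set D) := fun n hn => hinf₂ <| by
    obtain ⟨t, ht, hsum⟩ := hS₂.exists_finset_of_pow_succ_subset_span hVfg h1V
      (subset_span.trans' (Set.subset_union_right.trans (Set.subset_insert _ _))) hVD₂ hn
    refine ⟨t, ht, fun q hq => ?_⟩
    obtain ⟨c, hc⟩ := hsum q hq
    exact ⟨fun x => c x, fun x _ => (c x).2, hc⟩
  refine (two_le_gkWrt hVfg h1V (mul_self_le_finrank_pow hD₁.toSubfield hVfg h1U h1V hUV
    (hD₁.pow_subset hUD₁) hU hV)).trans (le_sSup ⟨V, ?_, h1V, hVD₂, rfl⟩)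
  exact Module.Finite.iff_fg.2 hVfg
end
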